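/- Area relation for the triangulation T₂ (the square with two interior vertices u, v on the diagonal structure, with six triangles pqu, qvu, qrv, rsv, suv, pus): for all points p, q, r, s, u, v ∈ ℂ × ℂ with p + r = q + s, the six triangle areas A = area(p,q,u), B = area(q,v,u), C = area(q,r,v), D = area(r,s,v), E = area(s,u,v), F = area(p,u,s) satisfy the quadratic relation A² − 2AC + 2AE + C² + 2CE + E² − B² − 2BD − 2BF − D² + 2DF − F² = 0. -/

import Mathlib

/-!
Measure everything from `p`: put `a = q - p`, `b = s - p`, `x = u - p`, `y = v - p`, so that the
parallelogram condition reads `r - p = a + b`. Twice each of the six areas is then a linear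
combination of the 2 × 2 minors `[a, b] = cross a b, [a, x], [a, y], [b, x], [b, y], [x, y]` of
the 2 × 4 matrix with columns `a, b, x, y`, and the quadratic relation among the areas is
precisely the Plücker relation `[a, b] [x, y] = [a, x] [b, y] - [a, y] [b, x]` among these minors.
-/

/-- The signed area of the ordered triangle `(p, q, r)` in the complex plane `ℂ × ℂ`. -/
noncomputable def triArea (p q r : ℂ × ℂ) : ℂ :=
  ((q.1 - p.1) * (r.2 - p.2) - (r.1 - p.1) * (q.2 - p.2)) / 2

section Cross

variable {R : Type*} [CommRing R]

def cross (x y : R × R) : R := x.1 * y.2 - x.2 * y.1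

theorem cross_mul_cross (a b x y : R × R) :
    cross a b * cross x y = cross a x * cross b y - cross a y * cross b x := by
  simp only [cross]
  ring

end Cross

/-- **Area relation for `T₂`** (the square with two interior vertices `u, v` and six triangles
`pqu, qvu, qrv, rsv, suv, pus`): in any drawing whose boundary `p q r s` forms a parallelogram,
the six triangle areas satisfy the stated quadratic relation. -/
theorem area_relation_T2 (p q r s u v : ℂ × ℂ) (hpar : p + r = q + s) :
    let A := triArea p q u
    let B := triArea q v u
    let C := triArea q r v
    let D := triArea r s v
    let E := triArea s u v
    let F := triArea p u s
    A ^ 2 - 2 * A * C + 2 * A * E + C ^ 2 + 2 * C * E + E ^ 2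
      - B ^ 2 - 2 * B * D - 2 * B * F - D ^ 2 + 2 * D * F - F ^ 2 = 0 := by
  obtain ⟨a, rfl⟩ : ∃ a, q = p + a := ⟨q - p, by abel⟩
  obtain ⟨b, rfl⟩ : ∃ b, s = p + b := ⟨s - p, by abel⟩
  obtain ⟨x, rfl⟩ : ∃ x, u = p + x := ⟨u - p, by abel⟩
  obtain ⟨y, rfl⟩ : ∃ y, v = p + y := ⟨v - p, by abel⟩
  obtain rfl : r = p + a + b := add_left_cancel (hpar.trans (by abel))
  have hA : triArea p (p + a) (p + x) = cross a x / 2 := by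
    simp only [triArea, cross, Prod.fst_add, Prod.snd_add]; ring
  have hB : triArea (p + a) (p + y) (p + x) = (cross a y - cross a x - cross x y) / 2 := by
    simp only [triArea, cross, Prod.fst_add, Prod.snd_add]; ring
  have hC : triArea (p + a) (p + a + b) (p + y) = (cross a b + cross b y) / 2 := by
    simp only [triArea, cross, Prod.fst_add, Prod.snd_add]; ring
  have hD : triArea (p + a + b) (p + b) (p + y) = (cross a b - cross a y) / 2 := by
    simp only [triArea, cross, Prod.fst_add, Prod.snd_add]; ring
  have hE : triArea (p + b) (p + x) (p + y) = (cross x y + cross b x - cross b y) / 2 := by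
    simp only [triArea, cross, Prod.fst_add, Prod.snd_add]; ring
  have hF : triArea p (p + x) (p + b) = -cross b x / 2 := by
    simp only [triArea, cross, Prod.fst_add, Prod.snd_add]; ring
  intro A B C D E F
  simp only [A, B, C, D, E, F, hA, hB, hC, hD, hE, hF]
  linear_combination cross_mul_cross a b x y
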